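/- Let G be a class 2 graph with critical edge e = rs₀, φ ∈ C^Δ(G−e), and F a maximal multifan at r w.r.t. e and φ. If v ∈ V(F) and v ≠ r, then F contains at least |φ̄(v)| neighbors of r having degree Δ. -/

import Mathlib

/-- A proper `k`-edge-coloring: colors are in `[k] = {0, …, k-1}` and edges sharing a
vertex receive distinct colors. -/
def IsProperEdgeColoring {V : Type*} (G : SimpleGraph V) (φ : Sym2 V → ℕ) (k : ℕ) : Prop :=
  (∀ e ∈ G.edgeSet, φ e < k) ∧
  ∀ e ∈ G.edgeSet, ∀ f ∈ G.edgeSet, e ≠ f → (∃ v, v ∈ e ∧ v ∈ f) → φ e ≠ φ f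

/-- The chromatic index `χ'(G)`: least `k` admitting a proper `k`-edge-coloring. -/
noncomputable def chromaticIndex {V : Type*} (G : SimpleGraph V) : ℕ :=
  sInf {k | ∃ φ, IsProperEdgeColoring G φ k}

/-- The set of colors of `[Δ]` missing at `v` under `φ` (w.r.t. the graph `G`). -/
def missing {V : Type*} (G : SimpleGraph V) (φ : Sym2 V → ℕ) (Δ : ℕ) (v : V) : Set ℕ :=
  {c | c < Δ ∧ ∀ e ∈ G.edgeSet, v ∈ e → φ e ≠ c}

/-- `s 0, s 1, …, s p` (with the edges `e_i = r s_i`, `e_0 = r s_0` being the uncolored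
edge) forms a multifan at `r` w.r.t. the edge `r s_0` and the coloring `φ` of
`G - r s_0` with colors in `[Δ]`: vertices are distinct, different from `r`, adjacent
to `r`, and for `i ≥ 1` the color `φ(r s_i)` is missing at some earlier `s_j`. -/
def IsMultifan {V : Type*} (G : SimpleGraph V) (φ : Sym2 V → ℕ) (Δ : ℕ)
    (r : V) {p : ℕ} (s : Fin (p + 1) → V) : Prop :=
  Function.Injective s ∧ (∀ i, s i ≠ r) ∧ (∀ i, G.Adj r (s i)) ∧
  ∀ i : Fin (p + 1), i ≠ 0 →
    ∃ j : Fin (p + 1), j < i ∧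
      φ s(r, s i) ∈ missing (G.deleteEdges {s(r, s 0)}) φ Δ (s j)

/-- A multifan at `r` is maximal if it cannot be extended by a further neighbor `t` of
`r` whose edge `r t` is colored with a color missing at some vertex of the fan. -/
def IsMaximalMultifan {V : Type*} (G : SimpleGraph V) (φ : Sym2 V → ℕ) (Δ : ℕ)
    (r : V) {p : ℕ} (s : Fin (p + 1) → V) : Prop :=
  IsMultifan G φ Δ r s ∧
  ∀ t : V, G.Adj r t → t ∉ ({r} ∪ Set.range s : Set V) →
    ∀ j : Fin (p + 1), φ s(r, t) ∉ missing (G.deleteEdges {s(r, s 0)}) φ Δ (s j)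

/-!
As `G` has no proper `Δ`-edge-coloring, no color is missing both at `r` and at the tip of a
linear fan ending in `s₀`: shifting colors down the fan would color `r s₀`. Every vertex of a
multifan is such a tip, and a Kempe swap on an `(α, γ)`-path shows that the missing sets of the fan
vertices are pairwise disjoint. By maximality each color missing at a fan vertex sits on one of
the `p` colored fan edges, so `∑ |φ̄(s j)| ≤ p`. Each `s j` with `φ̄(s j) ≠ ∅` contributes at least
one color, hence `|φ̄(s i)|` is at most the number of `s j` with `φ̄(s j) = ∅`, all of which have
degree `Δ`.
-/

open SimpleGraph Function

section Recoloring

variable {V : Type*} {H H₁ H₂ : SimpleGraph V} {ψ ψ' : Sym2 V → ℕ} {Δ c : ℕ} {u v x y : V}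

lemma not_isProperEdgeColoring_of_lt_chromaticIndex (h : Δ < chromaticIndex H) :
    ¬ IsProperEdgeColoring H ψ Δ :=
  fun hψ => (Nat.sInf_le ⟨ψ, hψ⟩ : chromaticIndex H ≤ Δ).not_gt h

lemma IsProperEdgeColoring.apply_ne_apply (hψ : IsProperEdgeColoring H ψ Δ) (hx : H.Adj v x)
    (hy : H.Adj v y) (hxy : x ≠ y) : ψ s(v, x) ≠ ψ s(v, y) :=
  hψ.2 _ hx _ hy (fun h => hxy (Sym2.congr_right.mp h))
    ⟨v, Sym2.mem_mk_left v x, Sym2.mem_mk_left v y⟩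

lemma missing_congr (h : ∀ f ∈ H.edgeSet, v ∈ f → ψ' f = ψ f) :
    missing H ψ' Δ v = missing H ψ Δ v := by
  ext c
  exact and_congr_right fun _ => forall₂_congr fun f hf => imp_congr_right fun hv => by
    rw [h f hf hv]

lemma missing_anti (h : H₁ ≤ H₂) : missing H₂ ψ Δ v ⊆ missing H₁ ψ Δ v :=
  fun _ hc => ⟨hc.1, fun f hf => hc.2 f (edgeSet_mono h hf)⟩

lemma IsProperEdgeColoring.anti (hψ : IsProperEdgeColoring H₂ ψ Δ) (h : H₁ ≤ H₂) :
    IsProperEdgeColoring H₁ ψ Δ :=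
  ⟨fun f hf => hψ.1 f (edgeSet_mono h hf),
    fun f hf g hg => hψ.2 f (edgeSet_mono h hf) g (edgeSet_mono h hg)⟩

lemma missing_finite : (missing H ψ Δ v).Finite :=
  (Set.finite_lt_nat Δ).subset fun _ hc => hc.1

variable [DecidableEq V]

lemma missing_eq_range_sdiff [Fintype (H.neighborSet v)] :
    missing H ψ Δ v = ↑(Finset.range Δ \ (H.incidenceFinset v).image ψ) := by
  ext c
  simp only [Finset.coe_sdiff, Finset.coe_range, Finset.coe_image, Set.mem_sdiff, Set.mem_Iio,
    Set.mem_image, Finset.mem_coe, mem_incidenceFinset, not_exists, not_and]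
  exact and_congr_right fun _ =>
    ⟨fun h f hf hfc => h f hf.1 hf.2 hfc, fun h f hf hvf hfc => h f ⟨hf, hvf⟩ hfc⟩

lemma sub_degree_le_ncard_missing [Fintype (H.neighborSet v)] :
    Δ - H.degree v ≤ (missing H ψ Δ v).ncard := by
  rw [missing_eq_range_sdiff, Set.ncard_coe_finset, ← card_incidenceFinset_eq_degree]
  calc Δ - (H.incidenceFinset v).card
      ≤ (Finset.range Δ).card - ((H.incidenceFinset v).image ψ).card := by
        rw [Finset.card_range]; exact Nat.sub_le_sub_left Finset.card_image_le _
    _ ≤ _ := Finset.le_card_sdiff _ _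

lemma IsProperEdgeColoring.update (hψ : IsProperEdgeColoring (H.deleteEdges {s(u, v)}) ψ Δ)
    (hu : c ∈ missing (H.deleteEdges {s(u, v)}) ψ Δ u)
    (hv : c ∈ missing (H.deleteEdges {s(u, v)}) ψ Δ v) :
    IsProperEdgeColoring H (update ψ s(u, v) c) Δ := by
  have hdel : ∀ f ∈ H.edgeSet, f ≠ s(u, v) → f ∈ (H.deleteEdges {s(u, v)}).edgeSet :=
    fun f hf hfe => by simp [edgeSet_deleteEdges, hf, hfe]
  have hfree : ∀ g ∈ H.edgeSet, g ≠ s(u, v) → ∀ w ∈ s(u, v), w ∈ g → ψ g ≠ c := by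
    intro g hg hge w hw hwg
    rcases Sym2.mem_iff.mp hw with rfl | rfl
    exacts [hu.2 g (hdel g hg hge) hwg, hv.2 g (hdel g hg hge) hwg]
  refine ⟨fun f hf => ?_, fun f hf g hg hfg ⟨w, hwf, hwg⟩ => ?_⟩
  · rcases eq_or_ne f s(u, v) with rfl | hfe
    · simpa using hu.1
    · rw [update_of_ne hfe]; exact hψ.1 f (hdel f hf hfe)
  · rcases eq_or_ne f s(u, v) with rfl | hfe <;> rcases eq_or_ne g s(u, v) with rfl | hge
    · exact absurd rfl hfg
    · rw [update_self, update_of_ne hge]; exact (hfree g hg hge w hwf hwg).symm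
    · rw [update_self, update_of_ne hfe]; exact hfree f hf hfe w hwg hwf
    · rw [update_of_ne hfe, update_of_ne hge]
      exact hψ.2 f (hdel f hf hfe) g (hdel g hg hge) hfg ⟨w, hwf, hwg⟩

lemma mem_missing_update_self (hψ : IsProperEdgeColoring H ψ Δ) (he : s(u, v) ∈ H.edgeSet)
    (hc : c ≠ ψ s(u, v)) : ψ s(u, v) ∈ missing H (update ψ s(u, v) c) Δ u := by
  refine ⟨hψ.1 _ he, fun f hf huf => ?_⟩
  rcases eq_or_ne f s(u, v) with rfl | hfe
  · rwa [update_self]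
  · rw [update_of_ne hfe]; exact hψ.2 f hf _ he hfe ⟨u, huf, Sym2.mem_mk_left u v⟩

lemma missing_update_of_not_mem {e : Sym2 V} (hv : v ∉ e) :
    missing H (update ψ e c) Δ v = missing H ψ Δ v :=
  missing_congr fun _ _ hvf => update_of_ne (by rintro rfl; exact hv hvf) _ _

end Recoloring

section LinearFan

variable {V : Type*} {G H : SimpleGraph V} {ψ : Sym2 V → ℕ} {Δ : ℕ} {r v₀ x y : V}

/-- Read from the tip: `x_k :: ⋯ :: x_1 :: [v₀]`, with `ψ(r x_{i+1})` missing at `x_i`. -/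
def IsLinearFan (H : SimpleGraph V) (ψ : Sym2 V → ℕ) (Δ : ℕ) (r v₀ : V) : List V → Prop
  | [] => False
  | [y] => y = v₀
  | x :: y :: l => x ∉ y :: l ∧ H.Adj r x ∧ ψ s(r, x) ∈ missing H ψ Δ y ∧
      IsLinearFan H ψ Δ r v₀ (y :: l)

lemma IsLinearFan.head_not_mem {l : List V} (hv₀ : v₀ ≠ r) (h : IsLinearFan H ψ Δ r v₀ (y :: l))
    (hx : x ∉ y :: l) : y ∉ s(r, x) := by
  have hyr : y ≠ r := by
    cases l with
    | nil => exact h ▸ hv₀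
    | cons _ _ => exact h.2.1.ne'
  have hyx : y ≠ x := by rintro rfl; exact hx List.mem_cons_self
  simp [hyr, hyx]

lemma IsLinearFan.update_of_not_mem [DecidableEq V] (hv₀ : v₀ ≠ r) {c : ℕ} :
    ∀ {l : List V}, IsLinearFan H ψ Δ r v₀ l → x ∉ l →
      IsLinearFan H (update ψ s(r, x) c) Δ r v₀ l
  | [], h, _ => h
  | [_], h, _ => h
  | a :: y :: l, ⟨ha, hadj, hmiss, hl⟩, hx => by
    have hy := hl.head_not_mem hv₀ fun h => hx (List.mem_cons_of_mem a h)
    have hax : s(r, a) ≠ s(r, x) := fun h => hx (Sym2.congr_right.mp h ▸ List.mem_cons_self)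
    refine ⟨ha, hadj, ?_, hl.update_of_not_mem hv₀ fun h => hx (List.mem_cons_of_mem a h)⟩
    rwa [update_of_ne hax, missing_update_of_not_mem hy]

lemma IsLinearFan.exists_of_mem :
    ∀ {l : List V}, IsLinearFan H ψ Δ r v₀ l → x ∈ l → ∃ m, IsLinearFan H ψ Δ r v₀ (x :: m)
  | [], h, _ => h.elim
  | [_], h, hx => by rw [List.mem_singleton.mp hx]; exact ⟨[], h⟩
  | _ :: _ :: _, h, hx => by
    rcases List.mem_cons.mp hx with rfl | hx
    · exact ⟨_, h⟩
    · exact h.2.2.2.exists_of_mem hx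

lemma IsLinearFan.exists_cons {l : List V} (h : IsLinearFan H ψ Δ r v₀ (y :: l))
    (hadj : H.Adj r x) (hx : ψ s(r, x) ∈ missing H ψ Δ y) :
    ∃ m, IsLinearFan H ψ Δ r v₀ (x :: m) := by
  by_cases hmem : x ∈ y :: l
  · exact h.exists_of_mem hmem
  · exact ⟨y :: l, hmem, hadj, hx, h⟩

/-- Recoloring `r x_k` by a color missing at `r` and `x_k` frees the old color of `r x_k` at
both `r` and `x_{k-1}`; repeating down to `v₀` colors `r v₀`. -/
lemma IsLinearFan.disjoint_missing [DecidableEq V]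
    (hG : ∀ ψ₀, ¬ IsProperEdgeColoring G ψ₀ Δ) (hv₀ : v₀ ≠ r) :
    ∀ {l : List V} {ψ : Sym2 V → ℕ} {x : V},
      IsProperEdgeColoring (G.deleteEdges {s(r, v₀)}) ψ Δ →
      IsLinearFan (G.deleteEdges {s(r, v₀)}) ψ Δ r v₀ (x :: l) →
      Disjoint (missing (G.deleteEdges {s(r, v₀)}) ψ Δ r)
        (missing (G.deleteEdges {s(r, v₀)}) ψ Δ x)
  | [], ψ, x, hψ, (h : x = v₀) => by
    subst h
    exact Set.disjoint_left.mpr fun α hαr hαx => hG _ (hψ.update hαr hαx)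
  | y :: l, ψ, x, hψ, ⟨hx, hadj, hcol, hl⟩ => by
    refine Set.disjoint_left.mpr fun α hαr hαx => ?_
    set G' := G.deleteEdges {s(r, v₀)}
    have hψ' : IsProperEdgeColoring G' (update ψ s(r, x) α) Δ :=
      (hψ.anti (deleteEdges_le _)).update (missing_anti (deleteEdges_le _) hαr)
        (missing_anti (deleteEdges_le _) hαx)
    have hold : ψ s(r, x) ∈ missing G' (update ψ s(r, x) α) Δ r :=
      mem_missing_update_self hψ hadj (hαx.2 _ hadj (Sym2.mem_mk_right r x)).symm
    have hold' : ψ s(r, x) ∈ missing G' (update ψ s(r, x) α) Δ y := by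
      rwa [missing_update_of_not_mem (hl.head_not_mem hv₀ hx)]
    have hl' := hl.update_of_not_mem hv₀ hx (c := α)
    exact Set.disjoint_left.mp (IsLinearFan.disjoint_missing hG hv₀ hψ' hl') hold hold'

end LinearFan

section Kempe

variable {V : Type*} {H : SimpleGraph V} {ψ : Sym2 V → ℕ} {Δ α γ c : ℕ} {r v₀ t v x y : V}
  {f : Sym2 V}

def kempeGraph (H : SimpleGraph V) (ψ : Sym2 V → ℕ) (α γ : ℕ) : SimpleGraph V :=
  fromEdgeSet {f | f ∈ H.edgeSet ∧ (ψ f = α ∨ ψ f = γ)}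

lemma kempeGraph_adj :
    (kempeGraph H ψ α γ).Adj x y ↔ H.Adj x y ∧ (ψ s(x, y) = α ∨ ψ s(x, y) = γ) := by
  simp only [kempeGraph, fromEdgeSet_adj, Set.mem_ofPred, mem_edgeSet]
  exact ⟨fun h => h.1, fun h => ⟨h, h.1.ne⟩⟩

lemma kempeGraph_reachable_of_mem (hf : f ∈ H.edgeSet) (hψf : ψ f = α ∨ ψ f = γ) (hx : x ∈ f)
    (hy : y ∈ f) (ht : (kempeGraph H ψ α γ).Reachable t x) :
    (kempeGraph H ψ α γ).Reachable t y := by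
  induction f using Sym2.ind with
  | _ a b =>
    have hab : (kempeGraph H ψ α γ).Adj a b := kempeGraph_adj.mpr ⟨hf, hψf⟩
    rcases Sym2.mem_iff.mp hx with rfl | rfl <;> rcases Sym2.mem_iff.mp hy with rfl | rfl
    exacts [ht, ht.trans hab.reachable, ht.trans hab.symm.reachable, ht]

/-- `(N(v) \ {a}).Subsingleton` for each neighbour `a`: `v` has at most two neighbours. -/
lemma kempeGraph_neighborSet_diff_subsingleton (hψ : IsProperEdgeColoring H ψ Δ) :
    ∀ v, ∀ a ∈ (kempeGraph H ψ α γ).neighborSet v,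
      ((kempeGraph H ψ α γ).neighborSet v \ {a}).Subsingleton := by
  intro v a ha x ⟨hx, hxa⟩ y ⟨hy, hya⟩
  by_contra hxy
  rw [mem_neighborSet, kempeGraph_adj] at ha hx hy
  have h₁ := hψ.apply_ne_apply ha.1 hx.1 (Ne.symm hxa)
  have h₂ := hψ.apply_ne_apply ha.1 hy.1 (Ne.symm hya)
  have h₃ := hψ.apply_ne_apply hx.1 hy.1 hxy
  rcases ha.2 with h | h <;> rcases hx.2 with h' | h' <;> rcases hy.2 with h'' | h'' <;> omega

lemma kempeGraph_neighborSet_subsingleton (hψ : IsProperEdgeColoring H ψ Δ)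
    (hc : c ∈ missing H ψ Δ v) (hcαγ : c = α ∨ c = γ) :
    ((kempeGraph H ψ α γ).neighborSet v).Subsingleton := by
  intro x hx y hy
  by_contra hxy
  rw [mem_neighborSet, kempeGraph_adj] at hx hy
  have h₁ := hψ.apply_ne_apply hx.1 hy.1 hxy
  have h₂ := hc.2 _ hx.1 (Sym2.mem_mk_left v x)
  have h₃ := hc.2 _ hy.1 (Sym2.mem_mk_left v y)
  rcases hcαγ with h | h <;> rcases hx.2 with h' | h' <;> rcases hy.2 with h'' | h'' <;> omega

open Classical in
/-- Exchanging `α` and `γ` on the component of `t` in the Kempe graph; an edge meeting the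
component in only one end has another color and is left unchanged by the swap. -/
noncomputable def kempeSwap (H : SimpleGraph V) (ψ : Sym2 V → ℕ) (α γ : ℕ) (t : V) :
    Sym2 V → ℕ :=
  fun f => if ∃ x ∈ f, (kempeGraph H ψ α γ).Reachable t x then Equiv.swap α γ (ψ f) else ψ f

lemma kempeSwap_apply_of_reachable (hx : x ∈ f) (ht : (kempeGraph H ψ α γ).Reachable t x) :
    kempeSwap H ψ α γ t f = Equiv.swap α γ (ψ f) :=
  if_pos ⟨x, hx, ht⟩

lemma kempeSwap_apply_of_not_reachable (hf : f ∈ H.edgeSet) (hx : x ∈ f)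
    (ht : ¬ (kempeGraph H ψ α γ).Reachable t x) : kempeSwap H ψ α γ t f = ψ f := by
  classical
  unfold kempeSwap
  split_ifs with h
  · obtain ⟨y, hy, hty⟩ := h
    by_cases hψf : ψ f = α ∨ ψ f = γ
    · exact absurd (kempeGraph_reachable_of_mem hf hψf hy hx hty) ht
    · push Not at hψf
      exact Equiv.swap_apply_of_ne_of_ne hψf.1 hψf.2
  · rfl

lemma Equiv.swap_apply_lt (hα : α < Δ) (hγ : γ < Δ) (hc : c < Δ) : Equiv.swap α γ c < Δ := by
  rw [Equiv.swap_apply_def]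
  split_ifs <;> assumption

lemma kempeSwap_isProperEdgeColoring (hψ : IsProperEdgeColoring H ψ Δ) (hα : α < Δ)
    (hγ : γ < Δ) : IsProperEdgeColoring H (kempeSwap H ψ α γ t) Δ := by
  refine ⟨fun f hf => ?_, fun f hf g hg hfg ⟨w, hwf, hwg⟩ => ?_⟩
  · have hx := f.out_fst_mem
    by_cases ht : (kempeGraph H ψ α γ).Reachable t f.out.1
    · rw [kempeSwap_apply_of_reachable hx ht]; exact Equiv.swap_apply_lt hα hγ (hψ.1 f hf)
    · rw [kempeSwap_apply_of_not_reachable hf hx ht]; exact hψ.1 f hf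
  · have hne := hψ.2 f hf g hg hfg ⟨w, hwf, hwg⟩
    by_cases ht : (kempeGraph H ψ α γ).Reachable t w
    · rw [kempeSwap_apply_of_reachable hwf ht, kempeSwap_apply_of_reachable hwg ht]
      exact (Equiv.swap α γ).injective.ne hne
    · rwa [kempeSwap_apply_of_not_reachable hf hwf ht,
        kempeSwap_apply_of_not_reachable hg hwg ht]

lemma missing_kempeSwap_of_not_reachable (hx : ¬ (kempeGraph H ψ α γ).Reachable t x) :
    missing H (kempeSwap H ψ α γ t) Δ x = missing H ψ Δ x :=
  missing_congr fun _ hf hxf => kempeSwap_apply_of_not_reachable hf hxf hx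

lemma mem_missing_kempeSwap_of_reachable (hα : α < Δ) (hγ : γ < Δ)
    (hx : (kempeGraph H ψ α γ).Reachable t x) :
    c ∈ missing H (kempeSwap H ψ α γ t) Δ x ↔ Equiv.swap α γ c ∈ missing H ψ Δ x := by
  have hlt : c < Δ ↔ Equiv.swap α γ c < Δ :=
    ⟨Equiv.swap_apply_lt hα hγ, fun h => by simpa using Equiv.swap_apply_lt hα hγ h⟩
  refine and_congr hlt (forall₂_congr fun f hf => imp_congr_right fun hxf => ?_)
  rw [kempeSwap_apply_of_reachable hxf hx, Ne, Equiv.swap_apply_eq_iff]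

/-- If the swapped component avoids `r`, a linear fan survives the swap up to the first vertex
at which `γ` becomes missing. -/
lemma IsLinearFan.exists_of_kempeSwap (hγr : γ ∈ missing H ψ Δ r) (hα : α < Δ)
    (htr : ¬ (kempeGraph H ψ α γ).Reachable t r) :
    ∀ {l : List V} {x : V}, IsLinearFan H ψ Δ r v₀ (x :: l) →
      ∃ z m, IsLinearFan H (kempeSwap H ψ α γ t) Δ r v₀ (z :: m) ∧
        (z = x ∨ γ ∈ missing H (kempeSwap H ψ α γ t) Δ z)
  | [], x, h => ⟨x, [], h, Or.inl rfl⟩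
  | y :: l, x, ⟨_, hadj, hcol, hl⟩ => by
    obtain ⟨z, m, hz, rfl | hγz⟩ := IsLinearFan.exists_of_kempeSwap hγr hα htr hl
    · have hrx : kempeSwap H ψ α γ t s(r, x) = ψ s(r, x) :=
        kempeSwap_apply_of_not_reachable hadj (Sym2.mem_mk_left r x) htr
      by_cases hflip : ψ s(r, x) = α ∧ (kempeGraph H ψ α γ).Reachable t z
      · refine ⟨z, m, hz, Or.inr ((mem_missing_kempeSwap_of_reachable hα hγr.1 hflip.2).mpr ?_)⟩
        rwa [Equiv.swap_apply_right, ← hflip.1]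
      · have hcol' : ψ s(r, x) ∈ missing H (kempeSwap H ψ α γ t) Δ z := by
          by_cases hz : (kempeGraph H ψ α γ).Reachable t z
          · have hγ : ψ s(r, x) ≠ γ := hγr.2 _ hadj (Sym2.mem_mk_left r x)
            rwa [mem_missing_kempeSwap_of_reachable hα hγr.1 hz,
              Equiv.swap_apply_of_ne_of_ne (fun h => hflip ⟨h, hz⟩) hγ]
          · rwa [missing_kempeSwap_of_not_reachable hz]
        obtain ⟨m', hm'⟩ := hz.exists_cons hadj (hrx ▸ hcol')
        exact ⟨x, m', hm', Or.inl rfl⟩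
    · exact ⟨z, m, hz, Or.inr hγz⟩

end Kempe

section Paths

variable {V : Type*} {H : SimpleGraph V}

lemma SimpleGraph.Walk.IsPath.support_isPrefix_or
    (hH : ∀ v, ∀ a ∈ H.neighborSet v, (H.neighborSet v \ {a}).Subsingleton) :
    ∀ {y u w : V} {p : H.Walk y u} {q : H.Walk y w}, p.IsPath → q.IsPath →
      (∀ a ∈ p.support, ∀ b ∈ q.support, H.Adj y a → H.Adj y b → a = b) →
      p.support <+: q.support ∨ q.support <+: p.support
  | _, _, _, .nil, q, _, _, _ => Or.inl ⟨_, q.cons_tail_support⟩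
  | _, _, _, .cons _ _, .nil, _, _, _ => Or.inr (by simp)
  | y, _, _, .cons hp p, .cons hq q, hpp, hqp, hstep => by
    obtain rfl := hstep _ (by simp) _ (by simp) hp hq
    rw [Walk.cons_isPath_iff] at hpp hqp
    have hnext : ∀ a ∈ p.support, ∀ b ∈ q.support, H.Adj _ a → H.Adj _ b → a = b :=
      fun a ha b hb hya hyb => hH _ y hp.symm ⟨hya, fun h => hpp.2 (h ▸ ha)⟩
        ⟨hyb, fun h => hqp.2 (h ▸ hb)⟩
    simpa [Walk.support_cons, List.prefix_cons_inj] using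
      support_isPrefix_or hH hpp.1 hqp.1 hnext

lemma SimpleGraph.Walk.IsPath.not_subsingleton_neighborSet {u v w : V} {q : H.Walk u w}
    (hq : q.IsPath) (hv : v ∈ q.support) (hvu : v ≠ u) (hvw : v ≠ w) :
    ¬ (H.neighborSet v).Subsingleton := by
  obtain ⟨n, rfl, hn⟩ := Walk.mem_support_iff_exists_getVert.mp hv
  have hn0 : n ≠ 0 := by rintro rfl; exact hvu (Walk.getVert_zero q)
  have hnl : n ≠ q.length := by rintro rfl; exact hvw (Walk.getVert_length q)
  have hprev : H.Adj (q.getVert (n - 1)) (q.getVert n) := by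
    simpa [Nat.sub_add_cancel (Nat.pos_of_ne_zero hn0)] using
      q.adj_getVert_succ (i := n - 1) (by omega)
  have hnext : H.Adj (q.getVert n) (q.getVert (n + 1)) := q.adj_getVert_succ (by omega)
  intro h
  have := hq.getVert_injOn (by simp; omega) (by simp; omega) (h hprev.symm hnext)
  omega

/-- Paths from `r` leave along its only edge and can never branch afterwards, so one of the two
paths extends the other and `u` or `w` is an inner vertex of a path. -/
lemma SimpleGraph.not_reachable_of_neighborSet_subsingleton
    (hH : ∀ v, ∀ a ∈ H.neighborSet v, (H.neighborSet v \ {a}).Subsingleton) {r u w : V}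
    (hr : (H.neighborSet r).Subsingleton) (hu : (H.neighborSet u).Subsingleton)
    (hw : (H.neighborSet w).Subsingleton) (hur : u ≠ r) (hwr : w ≠ r) (huw : u ≠ w)
    (hru : H.Reachable r u) : ¬ H.Reachable r w := by
  rintro hrw
  obtain ⟨p, hp⟩ := hru.exists_isPath
  obtain ⟨q, hq⟩ := hrw.exists_isPath
  rcases hp.support_isPrefix_or hH hq fun a _ b _ ha hb => hr ha hb with h | h
  · exact hq.not_subsingleton_neighborSet (h.subset p.end_mem_support) hur huw hu
  · exact hp.not_subsingleton_neighborSet (h.subset q.end_mem_support) hwr huw.symm hw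

end Paths

lemma SimpleGraph.degree_deleteEdges_lt {V : Type*} {G : SimpleGraph V} {u v : V}
    [Fintype (G.neighborSet u)] [Fintype ((G.deleteEdges {s(u, v)}).neighborSet u)]
    (h : G.Adj u v) :
    (G.deleteEdges {s(u, v)}).degree u < G.degree u := by
  rw [← card_neighborSet_eq_degree, ← card_neighborSet_eq_degree]
  exact Set.card_lt_card ⟨fun w hw => deleteEdges_le _ hw, fun hsub => by simpa using hsub h⟩

lemma ncard_le_card_filter_of_sum_lt {ι α : Type*} [Fintype ι] [DecidableEq ι] {M : ι → Set α}
    {P : ι → Prop} [DecidablePred P] (hfin : ∀ k, (M k).Finite) (hP : ∀ k, M k = ∅ → P k)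
    (hM : ∑ k, (M k).ncard < Fintype.card ι) (i : ι) :
    (M i).ncard ≤ (Finset.univ.filter P).card := by
  set T := Finset.univ.filter fun k => ¬ P k
  have hT : (T.erase i).card ≤ ∑ k ∈ Finset.univ.erase i, (M k).ncard :=
    calc (T.erase i).card = ∑ k ∈ T.erase i, 1 := Finset.card_eq_sum_ones _
      _ ≤ ∑ k ∈ T.erase i, (M k).ncard := Finset.sum_le_sum fun k hk =>
          (Set.ncard_pos (hfin k)).mpr <| Set.nonempty_iff_ne_empty.mpr fun h =>
            (Finset.mem_filter.mp (Finset.mem_of_mem_erase hk)).2 (hP k h)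
      _ ≤ _ := Finset.sum_le_sum_of_subset (Finset.erase_subset_erase i (Finset.subset_univ T))
  have hsum := Finset.add_sum_erase Finset.univ (fun k => (M k).ncard) (Finset.mem_univ i)
  have hpart : (Finset.univ.filter P).card + T.card = Fintype.card ι :=
    Finset.card_filter_add_card_filter_not P
  have hTi := Finset.pred_card_le_card_erase (s := T) (a := i)
  omega

section Multifan

variable {V : Type*} {G : SimpleGraph V} {φ : Sym2 V → ℕ} {Δ : ℕ} {r : V} {p : ℕ}
  {s : Fin (p + 1) → V}

lemma IsMultifan.adj_deleteEdges (hF : IsMultifan G φ Δ r s) {j : Fin (p + 1)} (hj : j ≠ 0) :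
    (G.deleteEdges {s(r, s 0)}).Adj r (s j) := by
  rw [deleteEdges_adj, Set.mem_singleton_iff]
  exact ⟨hF.2.2.1 j, fun h => hj (hF.1 (Sym2.congr_right.mp h))⟩

lemma IsMultifan.exists_isLinearFan (hF : IsMultifan G φ Δ r s) (j : Fin (p + 1)) :
    ∃ m, IsLinearFan (G.deleteEdges {s(r, s 0)}) φ Δ r (s 0) (s j :: m) := by
  induction j using WellFoundedLT.induction with
  | _ j ih =>
    rcases eq_or_ne j 0 with rfl | hj
    · exact ⟨[], rfl⟩
    · obtain ⟨k, hkj, hk⟩ := hF.2.2.2 j hj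
      obtain ⟨m, hm⟩ := ih k hkj
      exact hm.exists_cons (hF.adj_deleteEdges hj) hk

variable [DecidableEq V] (hG : ∀ ψ, ¬ IsProperEdgeColoring G ψ Δ)
  (hφ : IsProperEdgeColoring (G.deleteEdges {s(r, s 0)}) φ Δ)
include hG hφ

lemma IsMultifan.disjoint_missing_root (hF : IsMultifan G φ Δ r s) (j : Fin (p + 1)) :
    Disjoint (missing (G.deleteEdges {s(r, s 0)}) φ Δ r)
      (missing (G.deleteEdges {s(r, s 0)}) φ Δ (s j)) :=
  let ⟨_, hm⟩ := hF.exists_isLinearFan j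
  hm.disjoint_missing hG (hF.2.1 0) hφ

/-- With `α` missing at `s a` and `s b` and `γ` at `r`, all three have at most one neighbour in
the `(α, γ)`-Kempe graph, so one of `s a`, `s b` is not linked to `r`; swapping its component
makes `γ` missing at `r` and at a vertex of a linear fan. -/
lemma IsMultifan.pairwise_disjoint_missing (hF : IsMultifan G φ Δ r s)
    (hr : (missing (G.deleteEdges {s(r, s 0)}) φ Δ r).Nonempty) :
    Pairwise (Disjoint on fun j => missing (G.deleteEdges {s(r, s 0)}) φ Δ (s j)) := by
  set G' := G.deleteEdges {s(r, s 0)}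
  intro a b hab
  refine Set.disjoint_left.mpr fun α hαa hαb => ?_
  obtain ⟨γ, hγ⟩ := hr
  have hnot : ¬ ((kempeGraph G' φ α γ).Reachable r (s a) ∧
      (kempeGraph G' φ α γ).Reachable r (s b)) := fun h =>
    not_reachable_of_neighborSet_subsingleton (kempeGraph_neighborSet_diff_subsingleton hφ)
      (kempeGraph_neighborSet_subsingleton hφ hγ (Or.inr rfl))
      (kempeGraph_neighborSet_subsingleton hφ hαa (Or.inl rfl))
      (kempeGraph_neighborSet_subsingleton hφ hαb (Or.inl rfl))
      (hF.2.1 a) (hF.2.1 b) (hF.1.ne hab) h.1 h.2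
  obtain ⟨t, hαt, htr, m, hm⟩ : ∃ t, α ∈ missing G' φ Δ t ∧
      ¬ (kempeGraph G' φ α γ).Reachable t r ∧ ∃ m, IsLinearFan G' φ Δ r (s 0) (t :: m) := by
    rcases not_and_or.mp hnot with h | h
    exacts [⟨s a, hαa, fun h' => h h'.symm, hF.exists_isLinearFan a⟩,
      ⟨s b, hαb, fun h' => h h'.symm, hF.exists_isLinearFan b⟩]
  obtain ⟨z, m', hz, hzγ⟩ := hm.exists_of_kempeSwap hγ hαt.1 htr
  have hγz : γ ∈ missing G' (kempeSwap G' φ α γ t) Δ z := by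
    rcases hzγ with rfl | h
    · rwa [mem_missing_kempeSwap_of_reachable hαt.1 hγ.1 (Reachable.refl _),
        Equiv.swap_apply_right]
    · exact h
  have hγr : γ ∈ missing G' (kempeSwap G' φ α γ t) Δ r := by
    rwa [missing_kempeSwap_of_not_reachable htr]
  exact Set.disjoint_left.mp (hz.disjoint_missing hG (hF.2.1 0)
    (kempeSwap_isProperEdgeColoring hφ hαt.1 hγ.1)) hγr hγz

lemma IsMaximalMultifan.exists_color_eq (hF : IsMaximalMultifan G φ Δ r s) {j : Fin (p + 1)}
    {c : ℕ} (hc : c ∈ missing (G.deleteEdges {s(r, s 0)}) φ Δ (s j)) :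
    ∃ k ≠ 0, φ s(r, s k) = c := by
  set G' := G.deleteEdges {s(r, s 0)}
  obtain ⟨f, hf, hrf, hfc⟩ : ∃ f ∈ G'.edgeSet, r ∈ f ∧ φ f = c := by
    by_contra! h
    exact Set.disjoint_left.mp (hF.1.disjoint_missing_root hG hφ j) ⟨hc.1, h⟩ hc
  obtain ⟨z, rfl⟩ := Sym2.mem_iff_exists.mp hrf
  have hz : G'.Adj r z := hf
  by_cases hzs : z ∈ Set.range s
  · obtain ⟨k, rfl⟩ := hzs
    refine ⟨k, ?_, hfc⟩
    rintro rfl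
    simp [G'] at hz
  · exact absurd (hfc ▸ hc) <| hF.2 z (deleteEdges_le _ hz)
      (fun h => h.elim hz.ne' hzs) j

lemma IsMaximalMultifan.sum_ncard_missing_le (hF : IsMaximalMultifan G φ Δ r s)
    (hr : (missing (G.deleteEdges {s(r, s 0)}) φ Δ r).Nonempty) :
    ∑ j, (missing (G.deleteEdges {s(r, s 0)}) φ Δ (s j)).ncard ≤ p := by
  set G' := G.deleteEdges {s(r, s 0)}
  let M : Fin (p + 1) → Finset ℕ := fun j =>
    (missing_finite (H := G') (ψ := φ) (Δ := Δ) (v := s j)).toFinset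
  have hsub : Finset.univ.biUnion M ⊆ (Finset.univ.erase 0).image fun k => φ s(r, s k) := by
    intro c hc
    obtain ⟨j, -, hcj⟩ := Finset.mem_biUnion.mp hc
    obtain ⟨k, hk, rfl⟩ := hF.exists_color_eq hG hφ ((Set.Finite.mem_toFinset _).mp hcj)
    exact Finset.mem_image_of_mem _ (Finset.mem_erase.mpr ⟨hk, Finset.mem_univ k⟩)
  calc ∑ j, (missing G' φ Δ (s j)).ncard = (Finset.univ.biUnion M).card := by
        rw [Finset.card_biUnion fun a _ b _ hab => Set.Finite.disjoint_toFinset.mpr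
          (hF.1.pairwise_disjoint_missing hG hφ hr hab)]
        exact Finset.sum_congr rfl fun j _ => Set.ncard_eq_toFinset_card _ _
    _ ≤ ((Finset.univ.erase 0).image fun k => φ s(r, s k)).card := Finset.card_le_card hsub
    _ ≤ (Finset.univ.erase (0 : Fin (p + 1))).card := Finset.card_image_le
    _ = p := by simp

end Multifan

theorem multifan_delta_neighbors_general {V : Type*} [Fintype V]
    (G : SimpleGraph V) [DecidableRel G.Adj] (r : V) {p : ℕ} (s : Fin (p + 1) → V)
    (hclass2 : chromaticIndex G = G.maxDegree + 1)
    (φ : Sym2 V → ℕ)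
    (hφ : IsProperEdgeColoring (G.deleteEdges {s(r, s 0)}) φ G.maxDegree)
    (hF : IsMaximalMultifan G φ G.maxDegree r s) :
    ∀ i : Fin (p + 1),
      (missing (G.deleteEdges {s(r, s 0)}) φ G.maxDegree (s i)).ncard ≤
        (Finset.univ.filter fun j : Fin (p + 1) =>
          G.degree (s j) = G.maxDegree).card := by
  classical
  have hG : ∀ ψ, ¬ IsProperEdgeColoring G ψ G.maxDegree := fun _ =>
    not_isProperEdgeColoring_of_lt_chromaticIndex (by omega)
  have hr : (missing (G.deleteEdges {s(r, s 0)}) φ G.maxDegree r).Nonempty := by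
    have hlt := degree_deleteEdges_lt (hF.1.2.2.1 0)
    have hle := G.degree_le_maxDegree r
    have hmiss := sub_degree_le_ncard_missing (ψ := φ) (Δ := G.maxDegree) (v := r)
      (H := G.deleteEdges {s(r, s 0)})
    exact Set.nonempty_of_ncard_ne_zero (by omega)
  have hfull : ∀ j, missing (G.deleteEdges {s(r, s 0)}) φ G.maxDegree (s j) = ∅ →
      G.degree (s j) = G.maxDegree := by
    intro j hj
    have hmiss := sub_degree_le_ncard_missing (ψ := φ) (Δ := G.maxDegree) (v := s j)
      (H := G.deleteEdges {s(r, s 0)})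
    rw [hj, Set.ncard_empty] at hmiss
    have hle := degree_le_of_le (v := s j) (deleteEdges_le {s(r, s 0)} : _ ≤ G)
    have hle' := G.degree_le_maxDegree (s j)
    omega
  exact ncard_le_card_filter_of_sum_lt (fun _ => missing_finite) hfull
    (by simpa [Nat.lt_succ_iff] using hF.sum_ncard_missing_le hG hφ hr)

/-- If `F` is a maximal multifan at `r` w.r.t. the critical edge `r s₀` and `φ`, then for
every fan vertex `v = s i` (all of which differ from `r`), the fan contains at least
`|φ̄(v)|` neighbors of `r` of degree `Δ`. -/
theorem multifan_delta_neighbors {V : Type*} [Fintype V] [DecidableEq V]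
    (G : SimpleGraph V) [DecidableRel G.Adj] (r : V) {p : ℕ} (s : Fin (p + 1) → V)
    (hclass2 : chromaticIndex G = G.maxDegree + 1)
    (hcrit : chromaticIndex (G.deleteEdges {s(r, s 0)}) < chromaticIndex G)
    (φ : Sym2 V → ℕ)
    (hφ : IsProperEdgeColoring (G.deleteEdges {s(r, s 0)}) φ G.maxDegree)
    (hF : IsMaximalMultifan G φ G.maxDegree r s) :
    ∀ i : Fin (p + 1),
      (missing (G.deleteEdges {s(r, s 0)}) φ G.maxDegree (s i)).ncard ≤
        (Finset.univ.filter fun j : Fin (p + 1) =>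
          G.degree (s j) = G.maxDegree).card :=
  multifan_delta_neighbors_general G r s hclass2 φ hφ hF
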